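/- Consider the Widom–Rowlinson model with M ≥ 2 particle types on the K×L square lattice Λ with open boundary conditions. Then for every pair of distinct stable configurations s, s' ∈ X^s, the communication height satisfies Φ(s,s') − H(s) = min{K,L} + 1. -/

import Mathlib

/-!
Lower bound: as long as a configuration has fewer than `min K L` empty sites, some row and some
column are fully occupied, so the type occupying a full row is unique. Call `a` a filling row type
of `η` if some filling of `η` with fewer than `min K L` empty sites has a full row of type `a`.
A single-site update either fills or empties a site, so this set of types is monotone along the
update; a case analysis on the empty sites shows that it has at most one element whenever `η` has
at most `min K L` empty sites (in the extreme case they form a permutation matrix, and any two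
fillings force the same type on a common cross). Hence a path staying at or below `min K L`
empty sites cannot change the type, and some configuration on every path between distinct
stable configurations has `min K L + 1` empty sites.

Upper bound: number the sites column by column (or row by row, if `L < K`), so that adjacent
sites have numbers at distance at most `min K L`. Moving a window of `min K L` or `min K L + 1`
consecutive empty sites through this numbering, with type `m'` behind it and type `m` ahead of
it, leads from `s^(m)` to `s^(m')`.
-/

/-- Sites of the `K × L` square lattice with open boundary conditions:
`(j, i)` lies in column `c_j` and row `r_i`. -/
abbrev SiteO (K L : ℕ) := Fin L × Fin K

/-- Adjacency on the open lattice: the two sites agree in one coordinate and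
differ by exactly `1` in the other (no wrap-around). -/
def adjO (K L : ℕ) (v w : SiteO K L) : Prop :=
  (v.2 = w.2 ∧ ((v.1 : ℕ) + 1 = (w.1 : ℕ) ∨ (w.1 : ℕ) + 1 = (v.1 : ℕ))) ∨
  (v.1 = w.1 ∧ ((v.2 : ℕ) + 1 = (w.2 : ℕ) ∨ (w.2 : ℕ) + 1 = (v.2 : ℕ)))

/-- Widom–Rowlinson configurations with `M` particle types on the open lattice. -/
def IsWRO (K L M : ℕ) (σ : SiteO K L → ℕ) : Prop :=
  (∀ v, σ v ≤ M) ∧ ∀ v w, adjO K L v w → σ v = 0 ∨ σ w = 0 ∨ σ v = σ w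

/-- The energy `H(σ) = -#{v : σ v ≠ 0}`. -/
noncomputable def HO (K L : ℕ) (σ : SiteO K L → ℕ) : ℤ :=
  -(Nat.card {v : SiteO K L // σ v ≠ 0} : ℤ)

/-- `σ` and `σ'` are related by a single-site update: they differ at exactly
one site `v`, and moreover `σ v = 0` or `σ' v = 0`. -/
def UpdO (K L : ℕ) (σ σ' : SiteO K L → ℕ) : Prop :=
  ∃ v, (σ v = 0 ∨ σ' v = 0) ∧ σ v ≠ σ' v ∧ ∀ w, w ≠ v → σ w = σ' w

/-- A path `ω : σ → σ'`: a finite nonempty sequence of WR configurations from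
`σ` to `σ'` whose consecutive configurations coincide or are related by a
single-site update. -/
def IsPathO (K L M : ℕ) (ω : List (SiteO K L → ℕ)) (σ σ' : SiteO K L → ℕ) : Prop :=
  ω ≠ [] ∧ ω.head? = some σ ∧ ω.getLast? = some σ' ∧
    (∀ η ∈ ω, IsWRO K L M η) ∧
    ω.Chain' (fun η η' => η = η' ∨ UpdO K L η η')

/-- The height `Φ_ω` of a path: the maximum energy along it. -/
noncomputable def heightO (K L : ℕ) (ω : List (SiteO K L → ℕ)) : ℤ :=
  sSup {h : ℤ | ∃ η ∈ ω, HO K L η = h}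

/-- The communication height `Φ(σ,σ')`: the minimal height over all paths
`ω : σ → σ'`. -/
noncomputable def commO (K L M : ℕ) (σ σ' : SiteO K L → ℕ) : ℤ :=
  sInf {h : ℤ | ∃ ω, IsPathO K L M ω σ σ' ∧ heightO K L ω = h}

/-- The set `X^s = {s^(1),…,s^(M)}` of stable configurations. -/
def stableO (K L M : ℕ) : Set (SiteO K L → ℕ) :=
  {σ | ∃ m : ℕ, 1 ≤ m ∧ m ≤ M ∧ σ = fun _ => m}

open Finset

variable {K L M : ℕ}

def numZeros (K L : ℕ) (σ : SiteO K L → ℕ) : ℕ :=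
  #{v | σ v = 0}

theorem HO_eq_numZeros_sub (σ : SiteO K L → ℕ) :
    HO K L σ = numZeros K L σ - (L * K : ℕ) := by
  have h := card_filter_add_card_filter_not (s := (univ : Finset (SiteO K L))) (σ · = 0)
  rw [card_univ, Fintype.card_prod, Fintype.card_fin, Fintype.card_fin] at h
  rw [HO, Nat.card_eq_fintype_card, Fintype.card_subtype, numZeros]
  simp only [ne_eq]
  omega

theorem numZeros_const {c : ℕ} (hc : c ≠ 0) : numZeros K L (fun _ => c) = 0 := by
  simp [numZeros, hc]

theorem HO_le_heightO {ω : List (SiteO K L → ℕ)} {η : SiteO K L → ℕ} (hη : η ∈ ω) :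
    HO K L η ≤ heightO K L ω := by
  refine le_csSup ⟨0, ?_⟩ ⟨η, hη, rfl⟩
  rintro _ ⟨η', -, rfl⟩
  simp [HO]

theorem heightO_le {ω : List (SiteO K L → ℕ)} {c : ℤ} (hne : ω ≠ [])
    (h : ∀ η ∈ ω, HO K L η ≤ c) : heightO K L ω ≤ c := by
  obtain ⟨η, t, rfl⟩ := List.exists_cons_of_ne_nil hne
  refine csSup_le ⟨_, η, List.mem_cons_self, rfl⟩ ?_
  rintro _ ⟨η', hη', rfl⟩
  exact h η' hη'

theorem commO_eq_of_bounds {σ σ' : SiteO K L → ℕ} {c : ℤ}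
    (hup : ∃ ω, IsPathO K L M ω σ σ' ∧ ∀ η ∈ ω, HO K L η ≤ c)
    (hlow : ∀ ω, IsPathO K L M ω σ σ' → ∃ η ∈ ω, c ≤ HO K L η) :
    commO K L M σ σ' = c := by
  obtain ⟨ω₀, hω₀, hω₀c⟩ := hup
  have hlb : c ∈ lowerBounds {h | ∃ ω, IsPathO K L M ω σ σ' ∧ heightO K L ω = h} := by
    rintro _ ⟨ω, hω, rfl⟩
    obtain ⟨η, hη, hcη⟩ := hlow ω hω
    exact hcη.trans (HO_le_heightO hη)
  apply le_antisymm
  · exact (csInf_le ⟨c, hlb⟩ ⟨ω₀, hω₀, rfl⟩).trans (heightO_le hω₀.1 hω₀c)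
  · exact le_csInf ⟨_, ω₀, hω₀, rfl⟩ hlb

theorem isWRO_const {c : ℕ} (hc : c ≤ M) : IsWRO K L M (fun _ => c) :=
  ⟨fun _ => hc, fun _ _ _ => Or.inr (Or.inr rfl)⟩

theorem adjO_symm {v w : SiteO K L} (h : adjO K L v w) : adjO K L w v := by
  rcases h with ⟨h₁, h₂⟩ | ⟨h₁, h₂⟩
  · exact Or.inl ⟨h₁.symm, h₂.symm⟩
  · exact Or.inr ⟨h₁.symm, h₂.symm⟩

theorem apply_eq_of_forall_consecutive {α : Type*} {n : ℕ} {f : Fin n → α}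
    (h : ∀ k (hk : k + 1 < n), f ⟨k, by omega⟩ = f ⟨k + 1, hk⟩) (a b : Fin n) : f a = f b := by
  have key : ∀ k (hk : k < n), f ⟨k, hk⟩ = f ⟨0, by omega⟩ := by
    intro k
    induction k with
    | zero => intro _; rfl
    | succ k ih => intro hk; rw [← h k hk, ih]
  rw [key a a.2, key b b.2]

namespace IsWRO

variable {σ : SiteO K L → ℕ}

theorem eq_of_adjO (hσ : IsWRO K L M σ) {v w : SiteO K L} (hvw : adjO K L v w)
    (hv : σ v ≠ 0) (hw : σ w ≠ 0) : σ v = σ w :=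
  ((hσ.2 v w hvw).resolve_left hv).resolve_left hw

theorem row_eq (hσ : IsWRO K L M σ) {i : Fin K} (hi : ∀ j, σ (j, i) ≠ 0) (j j' : Fin L) :
    σ (j, i) = σ (j', i) :=
  apply_eq_of_forall_consecutive (f := fun j => σ (j, i))
    (fun _ _ => hσ.eq_of_adjO (Or.inl ⟨rfl, Or.inl rfl⟩) (hi _) (hi _)) j j'

theorem col_eq (hσ : IsWRO K L M σ) {j : Fin L} (hj : ∀ i, σ (j, i) ≠ 0) (i i' : Fin K) :
    σ (j, i) = σ (j, i') :=
  apply_eq_of_forall_consecutive (f := fun i => σ (j, i))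
    (fun _ _ => hσ.eq_of_adjO (Or.inr ⟨rfl, Or.inl rfl⟩) (hj _) (hj _)) i i'

end IsWRO

section Counting

variable {σ : SiteO K L → ℕ}

theorem exists_row_ne_zero (h : numZeros K L σ < K) : ∃ i : Fin K, ∀ j, σ (j, i) ≠ 0 := by
  obtain ⟨i, -, hi⟩ := exists_mem_notMem_of_card_lt_card
    (s := image Prod.snd {v | σ v = 0}) (t := univ) (by simpa using card_image_le.trans_lt h)
  exact ⟨i, fun j hj => hi (mem_image.2 ⟨(j, i), by simpa using hj, rfl⟩)⟩

theorem exists_col_ne_zero (h : numZeros K L σ < L) : ∃ j : Fin L, ∀ i, σ (j, i) ≠ 0 := by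
  obtain ⟨j, -, hj⟩ := exists_mem_notMem_of_card_lt_card
    (s := image Prod.fst {v | σ v = 0}) (t := univ) (by simpa using card_image_le.trans_lt h)
  exact ⟨j, fun i hi => hj (mem_image.2 ⟨(j, i), by simpa using hi, rfl⟩)⟩

theorem eq_of_snd_eq_of_forall_row (hrow : ∀ i, ∃ j, σ (j, i) = 0) (hn : numZeros K L σ ≤ K)
    {x y : SiteO K L} (hx : σ x = 0) (hy : σ y = 0) (hxy : x.2 = y.2) : x = y := by
  have hsurj : image Prod.snd {v | σ v = 0} = univ :=
    eq_univ_of_forall fun i =>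
      let ⟨j, hj⟩ := hrow i; mem_image.2 ⟨(j, i), by simpa using hj, rfl⟩
  have hcard : #(image Prod.snd {v | σ v = 0}) = numZeros K L σ :=
    le_antisymm card_image_le (by simpa [hsurj] using hn)
  exact card_image_iff.1 hcard (by simpa using hx) (by simpa using hy) hxy

theorem eq_of_fst_eq_of_forall_col (hcol : ∀ j, ∃ i, σ (j, i) = 0) (hn : numZeros K L σ ≤ L)
    {x y : SiteO K L} (hx : σ x = 0) (hy : σ y = 0) (hxy : x.1 = y.1) : x = y := by
  have hsurj : image Prod.fst {v | σ v = 0} = univ :=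
    eq_univ_of_forall fun j =>
      let ⟨i, hi⟩ := hcol j; mem_image.2 ⟨(j, i), by simpa using hi, rfl⟩
  have hcard : #(image Prod.fst {v | σ v = 0}) = numZeros K L σ :=
    le_antisymm card_image_le (by simpa [hsurj] using hn)
  exact card_image_iff.1 hcard (by simpa using hx) (by simpa using hy) hxy

end Counting

def IsFilling (η σ : SiteO K L → ℕ) : Prop :=
  ∀ v, η v ≠ 0 → σ v = η v

theorem IsFilling.refl (η : SiteO K L → ℕ) : IsFilling η η :=
  fun _ _ => rfl

theorem IsFilling.trans {η σ τ : SiteO K L → ℕ} (h₁ : IsFilling η σ) (h₂ : IsFilling σ τ) :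
    IsFilling η τ :=
  fun v hv => (h₂ v (h₁ v hv ▸ hv)).trans (h₁ v hv)

theorem IsFilling.numZeros_lt {η σ : SiteO K L → ℕ} (h : IsFilling η σ) (hne : η ≠ σ) :
    numZeros K L σ < numZeros K L η := by
  obtain ⟨v, hv⟩ := Function.ne_iff.1 hne
  have hηv : η v = 0 := by_contra fun h' => hv (h v h').symm
  refine card_lt_card ⟨fun w hw => ?_, fun hsub => ?_⟩
  · simp only [mem_filter, mem_univ, true_and] at hw ⊢
    exact by_contra fun h' => h' (h w h' ▸ hw)
  · have := hsub (by simpa using hηv)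
    simp only [mem_filter, mem_univ, true_and] at this
    exact hv (hηv.trans this.symm)

theorem UpdO.ne {σ τ : SiteO K L → ℕ} (h : UpdO K L σ τ) : σ ≠ τ := by
  obtain ⟨v, -, hv, -⟩ := h
  exact fun h' => hv (congrFun h' v)

theorem UpdO.isFilling_or {σ τ : SiteO K L → ℕ} (h : UpdO K L σ τ) :
    IsFilling σ τ ∨ IsFilling τ σ := by
  obtain ⟨v, hv | hv, -, hrest⟩ := h
  · exact Or.inl fun w hw => (hrest w (by rintro rfl; exact hw hv)).symm
  · exact Or.inr fun w hw => hrest w (by rintro rfl; exact hw hv)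

def HasFullRow (σ : SiteO K L → ℕ) (a : ℕ) : Prop :=
  a ≠ 0 ∧ ∃ i : Fin K, ∀ j, σ (j, i) = a

namespace HasFullRow

variable {σ : SiteO K L → ℕ} {a b : ℕ}

theorem of_isFilling {η : SiteO K L → ℕ} (hησ : IsFilling η σ) (ha : HasFullRow η a) :
    HasFullRow σ a := by
  obtain ⟨ha0, i, hi⟩ := ha
  exact ⟨ha0, i, fun j => (hησ _ (hi j ▸ ha0)).trans (hi j)⟩

theorem col_eq (hσ : IsWRO K L M σ) {j : Fin L} (hj : ∀ i, σ (j, i) ≠ 0) (ha : HasFullRow σ a)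
    (i : Fin K) : σ (j, i) = a := by
  obtain ⟨-, i', hi'⟩ := ha
  rw [hσ.col_eq hj i i', hi']

theorem unique (hσ : IsWRO K L M σ) (hn : numZeros K L σ < L) (ha : HasFullRow σ a)
    (hb : HasFullRow σ b) : a = b := by
  obtain ⟨j, hj⟩ := exists_col_ne_zero hn
  obtain ⟨i, -⟩ := ha.2
  rw [← ha.col_eq hσ hj i, hb.col_eq hσ hj i]

end HasFullRow

def IsFillingRowType (K L M : ℕ) (η : SiteO K L → ℕ) (a : ℕ) : Prop :=
  ∃ σ, IsWRO K L M σ ∧ IsFilling η σ ∧ numZeros K L σ < min K L ∧ HasFullRow σ a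

namespace IsFillingRowType

variable {η : SiteO K L → ℕ} {a b : ℕ}

theorem of_isFilling {τ : SiteO K L → ℕ} (hητ : IsFilling η τ) (ha : IsFillingRowType K L M τ a) :
    IsFillingRowType K L M η a :=
  let ⟨σ, hσ, hτσ, hn, hσa⟩ := ha
  ⟨σ, hσ, hητ.trans hτσ, hn, hσa⟩

theorem exists_of_numZeros_lt (hη : IsWRO K L M η) (hn : numZeros K L η < min K L) :
    ∃ a, IsFillingRowType K L M η a := by
  obtain ⟨i, hi⟩ := exists_row_ne_zero (hn.trans_le (min_le_left K L))
  have hL : 0 < L := by have := min_le_right K L; omega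
  exact ⟨η (⟨0, hL⟩, i), η, hη, IsFilling.refl η, hn,
    hi _, i, fun j => hη.row_eq hi j _⟩

theorem const_self (hK : 0 < K) (hL : 0 < L) {c : ℕ} (hc : c ≠ 0) (hcM : c ≤ M) :
    IsFillingRowType K L M (fun _ => c) c :=
  ⟨_, isWRO_const hcM, IsFilling.refl _, by simp [numZeros_const hc, hK, hL], hc, ⟨0, hK⟩,
    fun _ => rfl⟩

theorem eq_of_const {c : ℕ} (hc : c ≠ 0) (ha : IsFillingRowType K L M (fun _ => c) a) :
    a = c := by
  obtain ⟨σ, -, hσ, hn, -, i, hi⟩ := ha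
  have hL : 0 < L := by have := min_le_right K L; omega
  exact (hi ⟨0, hL⟩).symm.trans (hσ _ hc)

theorem eq_of_row_ne_zero (hη : IsWRO K L M η) {i : Fin K} (hi : ∀ j, η (j, i) ≠ 0)
    (ha : IsFillingRowType K L M η a) (j : Fin L) : η (j, i) = a := by
  obtain ⟨σ, hσ, hησ, hn, hσa⟩ := ha
  have hrow : HasFullRow η (η (j, i)) := ⟨hi j, i, fun j' => hη.row_eq hi j' j⟩
  exact (hrow.of_isFilling hησ).unique hσ (hn.trans_le (min_le_right K L)) hσa

theorem eq_of_col_ne_zero {j : Fin L} (hj : ∀ i, η (j, i) ≠ 0)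
    (ha : IsFillingRowType K L M η a) (hb : IsFillingRowType K L M η b) : a = b := by
  have key : ∀ c, IsFillingRowType K L M η c → ∀ i, η (j, i) = c := by
    rintro c ⟨σ, hσ, hησ, -, hσc⟩ i
    have hcol : ∀ i, σ (j, i) = η (j, i) := fun i => hησ _ (hj i)
    rw [← hcol, hσc.col_eq hσ (fun i => hcol i ▸ hj i)]
  have ha' := key a ha
  obtain ⟨_, -, -, -, -, i, -⟩ := ha
  rw [← ha' i, key b hb i]

theorem exists_cross (hrow : ∀ i, ∃ j, η (j, i) = 0)
    (hrowinj : ∀ x y, η x = 0 → η y = 0 → x.2 = y.2 → x = y)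
    (hcolinj : ∀ x y, η x = 0 → η y = 0 → x.1 = y.1 → x = y)
    (ha : IsFillingRowType K L M η a) :
    ∃ x, η x = 0 ∧ ∀ y, y ≠ x → (y.1 = x.1 ∨ y.2 = x.2) → η y = a := by
  obtain ⟨σ, hσ, hησ, -, ha0, i, hi⟩ := ha
  obtain ⟨j, hx⟩ := hrow i
  have hη : ∀ y, y ≠ (j, i) → (y.1 = j ∨ y.2 = i) → η y ≠ 0 := by
    rintro y hy (h | h) h0
    · exact hy (hcolinj y _ h0 hx h)
    · exact hy (hrowinj y _ h0 hx h)
  have hcol : ∀ i', σ (j, i') ≠ 0 := by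
    intro i'
    by_cases h : ((j, i') : SiteO K L) = (j, i)
    · rw [h, hi]; exact ha0
    · rw [hησ _ (hη _ h (Or.inl rfl))]; exact hη _ h (Or.inl rfl)
  refine ⟨(j, i), hx, fun y hy hyx => (hησ y (hη y hy hyx)).symm.trans ?_⟩
  rcases hyx with h | h
  · rw [show y = (j, y.2) from Prod.ext h rfl, hσ.col_eq hcol y.2 i, hi]
  · rw [show y = (y.1, i) from Prod.ext rfl h, hi]

theorem eq_of_forall_row_col_zero (hL : 2 ≤ L) (hrow : ∀ i, ∃ j, η (j, i) = 0)
    (hcol : ∀ j, ∃ i, η (j, i) = 0) (hn : numZeros K L η ≤ min K L)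
    (ha : IsFillingRowType K L M η a) (hb : IsFillingRowType K L M η b) : a = b := by
  have hrowinj : ∀ x y, η x = 0 → η y = 0 → x.2 = y.2 → x = y := fun _ _ =>
    eq_of_snd_eq_of_forall_row hrow (hn.trans (min_le_left K L))
  have hcolinj : ∀ x y, η x = 0 → η y = 0 → x.1 = y.1 → x = y := fun _ _ =>
    eq_of_fst_eq_of_forall_col hcol (hn.trans (min_le_right K L))
  obtain ⟨x, hx, hxa⟩ := exists_cross hrow hrowinj hcolinj ha
  obtain ⟨x', hx', hx'b⟩ := exists_cross hrow hrowinj hcolinj hb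
  by_cases hxx' : x = x'
  · subst hxx'
    have : Nontrivial (Fin L) := Fin.nontrivial_iff_two_le.2 hL
    obtain ⟨j, hj⟩ := exists_ne x.1
    have hy : ((j, x.2) : SiteO K L) ≠ x := fun h => hj (congrArg Prod.fst h)
    rw [← hxa _ hy (Or.inr rfl), hx'b _ hy (Or.inr rfl)]
  · have hy : ((x.1, x'.2) : SiteO K L) ≠ x :=
      fun h => hxx' (hrowinj x x' hx hx' (congrArg Prod.snd h).symm)
    have hy' : ((x.1, x'.2) : SiteO K L) ≠ x' :=
      fun h => hxx' (hcolinj x x' hx hx' (congrArg Prod.fst h :))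
    rw [← hxa _ hy (Or.inl rfl), hx'b _ hy' (Or.inr rfl)]

theorem unique (hη : IsWRO K L M η) (hn : numZeros K L η ≤ min K L) (hL : 2 ≤ L)
    (ha : IsFillingRowType K L M η a) (hb : IsFillingRowType K L M η b) : a = b := by
  by_cases hrow : ∃ i, ∀ j, η (j, i) ≠ 0
  · obtain ⟨i, hi⟩ := hrow
    have j : Fin L := ⟨0, by omega⟩
    rw [← eq_of_row_ne_zero hη hi ha j, eq_of_row_ne_zero hη hi hb j]
  by_cases hcol : ∃ j, ∀ i, η (j, i) ≠ 0
  · obtain ⟨j, hj⟩ := hcol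
    exact eq_of_col_ne_zero hj ha hb
  push Not at hrow hcol
  exact eq_of_forall_row_col_zero hL hrow hcol hn ha hb

theorem of_updO {τ : SiteO K L → ℕ} (hη : IsWRO K L M η) (hτ : IsWRO K L M τ)
    (hn : numZeros K L η ≤ min K L) (hL : 2 ≤ L) (hητ : UpdO K L η τ)
    (ha : IsFillingRowType K L M η a) : IsFillingRowType K L M τ a := by
  rcases hητ.isFilling_or with h | h
  · obtain ⟨b, hb⟩ := exists_of_numZeros_lt hτ ((h.numZeros_lt hητ.ne).trans_le hn)
    rwa [unique hη hn hL ha (hb.of_isFilling h)]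
  · exact ha.of_isFilling h

end IsFillingRowType

theorem exists_min_lt_numZeros_of_isPathO (hK : 0 < K) (hL : 2 ≤ L) {a b : ℕ} (ha : a ≠ 0)
    (haM : a ≤ M) (hb : b ≠ 0) (hab : a ≠ b) {ω : List (SiteO K L → ℕ)}
    (hω : IsPathO K L M ω (fun _ => a) (fun _ => b)) :
    ∃ η ∈ ω, min K L < numZeros K L η := by
  by_contra! hn
  obtain ⟨hne, hhead, hlast, hwr, hchain⟩ := hω
  have hall := (List.IsChain.iff_mem.1 hchain).induction (IsFillingRowType K L M · a) ω
    (fun x y ⟨hx, hy, hxy⟩ hxa => hxy.elim (· ▸ hxa) fun hu =>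
      hxa.of_updO (hwr x hx) (hwr y hy) (hn x hx) hL hu)
    (fun lne => by
      rw [Option.some_inj.1 ((List.head?_eq_some_head lne).symm.trans hhead)]
      exact .const_self hK (by omega) ha haM)
  exact hab (hall _ (List.mem_of_getLast? hlast) |>.eq_of_const hb)

def StepBelow (K L M B : ℕ) (σ τ : SiteO K L → ℕ) : Prop :=
  UpdO K L σ τ ∧ IsWRO K L M τ ∧ numZeros K L τ ≤ B

theorem exists_isPathO_of_reflTransGen {B : ℕ} {σ τ : SiteO K L → ℕ}
    (h : Relation.ReflTransGen (StepBelow K L M B) σ τ) (hσ : IsWRO K L M σ)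
    (hσB : numZeros K L σ ≤ B) :
    ∃ ω, IsPathO K L M ω σ τ ∧ ∀ η ∈ ω, numZeros K L η ≤ B := by
  obtain ⟨ω, hne, hchain, hhead, hlast⟩ := List.exists_isChain_ne_nil_of_relationReflTransGen h
  have hgood : ∀ η ∈ ω, IsWRO K L M η ∧ numZeros K L η ≤ B :=
    hchain.induction _ ω (fun _ _ hxy _ => hxy.2) (fun _ => hhead ▸ ⟨hσ, hσB⟩)
  refine ⟨ω, ⟨hne, ?_, ?_, fun η hη => (hgood η hη).1, hchain.imp fun _ _ h => Or.inr h.1⟩,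
    fun η hη => (hgood η hη).2⟩
  · rw [List.head?_eq_some_head hne, hhead]
  · rw [List.getLast?_eq_some_getLast hne, hlast]

section Band

variable {N W : ℕ} (e : SiteO K L ≃ Fin N) {m m' : ℕ}

def bandConfig (m m' p q : ℕ) : SiteO K L → ℕ := fun v =>
  if (e v : ℕ) < p then m' else if (e v : ℕ) < q then 0 else m

theorem bandConfig_zero_zero : bandConfig e m m' 0 0 = fun _ => m := by
  funext v
  simp [bandConfig]

theorem bandConfig_self_self : bandConfig e m m' N N = fun _ => m' := by
  funext v
  simp [bandConfig, (e v).2]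

theorem isWRO_bandConfig (hband : ∀ v w, adjO K L v w → (e v : ℕ) ≤ e w + W) (hmM : m ≤ M)
    (hm'M : m' ≤ M) {p q : ℕ} (hpq : p = 0 ∨ N ≤ q ∨ p + W ≤ q) :
    IsWRO K L M (bandConfig e m m' p q) := by
  refine ⟨fun v => by unfold bandConfig; split_ifs <;> omega, fun v w hvw => ?_⟩
  have := hband v w hvw
  have := hband w v (adjO_symm hvw)
  have := (e v).2
  have := (e w).2
  unfold bandConfig
  split_ifs <;> omega

theorem numZeros_bandConfig_le (hm : m ≠ 0) (hm' : m' ≠ 0) (p q : ℕ) :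
    numZeros K L (bandConfig e m m' p q) ≤ q - p := by
  calc numZeros K L (bandConfig e m m' p q) ≤ #(Ico p q) := by
        refine card_le_card_of_injOn (fun v => (e v : ℕ)) (fun v hv => ?_)
          (fun v _ w _ h => e.injective (Fin.ext h))
        have hv := (mem_filter.1 (mem_coe.1 hv)).2
        simp only [bandConfig] at hv
        simp only [coe_Ico, Set.mem_Ico]
        split_ifs at hv <;> omega
    _ = q - p := Nat.card_Ico p q

theorem updO_bandConfig_right (hm : m ≠ 0) {p q : ℕ} (hpq : p ≤ q) (hq : q < N) :
    UpdO K L (bandConfig e m m' p q) (bandConfig e m m' p (q + 1)) := by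
  refine ⟨e.symm ⟨q, hq⟩, ?_, ?_, fun w hw => ?_⟩
  · simp only [bandConfig, Equiv.apply_symm_apply]; split_ifs <;> omega
  · simp only [bandConfig, Equiv.apply_symm_apply]; split_ifs <;> omega
  · have : (e w : ℕ) ≠ q := fun h => hw (e.eq_symm_apply.2 (Fin.ext h))
    simp only [bandConfig]
    split_ifs <;> omega

theorem updO_bandConfig_left (hm' : m' ≠ 0) {p q : ℕ} (hpq : p < q) (hq : q ≤ N) :
    UpdO K L (bandConfig e m m' p q) (bandConfig e m m' (p + 1) q) := by
  refine ⟨e.symm ⟨p, by omega⟩, ?_, ?_, fun w hw => ?_⟩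
  · simp only [bandConfig, Equiv.apply_symm_apply]; split_ifs <;> omega
  · simp only [bandConfig, Equiv.apply_symm_apply]; split_ifs <;> omega
  · have : (e w : ℕ) ≠ p := fun h => hw (e.eq_symm_apply.2 (Fin.ext h))
    simp only [bandConfig]
    split_ifs <;> omega

theorem stepBelow_bandConfig_right (hband : ∀ v w, adjO K L v w → (e v : ℕ) ≤ e w + W)
    (hm : m ≠ 0) (hm' : m' ≠ 0) (hmM : m ≤ M) (hm'M : m' ≤ M) {B p q : ℕ} (hpq : p ≤ q)
    (hq : q < N) (hval : p = 0 ∨ N ≤ q + 1 ∨ p + W ≤ q + 1) (hlen : q + 1 - p ≤ B) :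
    StepBelow K L M B (bandConfig e m m' p q) (bandConfig e m m' p (q + 1)) :=
  ⟨updO_bandConfig_right e hm hpq hq, isWRO_bandConfig e hband hmM hm'M hval,
    (numZeros_bandConfig_le e hm hm' _ _).trans hlen⟩

theorem stepBelow_bandConfig_left (hband : ∀ v w, adjO K L v w → (e v : ℕ) ≤ e w + W)
    (hm : m ≠ 0) (hm' : m' ≠ 0) (hmM : m ≤ M) (hm'M : m' ≤ M) {B p q : ℕ} (hpq : p < q)
    (hq : q ≤ N) (hval : N ≤ q ∨ p + 1 + W ≤ q) (hlen : q - (p + 1) ≤ B) :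
    StepBelow K L M B (bandConfig e m m' p q) (bandConfig e m m' (p + 1) q) :=
  ⟨updO_bandConfig_left e hm' hpq hq, isWRO_bandConfig e hband hmM hm'M (Or.inr hval),
    (numZeros_bandConfig_le e hm hm' _ _).trans hlen⟩

theorem reflTransGen_const_const (hband : ∀ v w, adjO K L v w → (e v : ℕ) ≤ e w + W)
    (hWN : W ≤ N) (hm : m ≠ 0) (hm' : m' ≠ 0) (hmM : m ≤ M) (hm'M : m' ≤ M) :
    Relation.ReflTransGen (StepBelow K L M (W + 1)) (fun _ => m) (fun _ => m') := by
  let R := Relation.ReflTransGen (StepBelow K L M (W + 1))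
  have right := fun {p q} =>
    stepBelow_bandConfig_right e hband hm hm' hmM hm'M (B := W + 1) (p := p) (q := q)
  have left := fun {p q} =>
    stepBelow_bandConfig_left e hband hm hm' hmM hm'M (B := W + 1) (p := p) (q := q)
  have fill : ∀ q ≤ W, R (bandConfig e m m' 0 0) (bandConfig e m m' 0 q) := by
    intro q
    induction q with
    | zero => exact fun _ => .refl
    | succ q ih => exact fun hq => (ih (by omega)).tail (right (by omega) (by omega) (by omega)
        (by omega))
  have shift : ∀ p ≤ N - W, R (bandConfig e m m' 0 W) (bandConfig e m m' p (W + p)) := by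
    intro p
    induction p with
    | zero => exact fun _ => .refl
    | succ p ih => exact fun hp => ((ih (by omega)).tail (right (by omega) (by omega)
        (by omega) (by omega))).tail (left (by omega) (by omega) (by omega) (by omega))
  have drain : ∀ r ≤ W, R (bandConfig e m m' (N - W) N) (bandConfig e m m' (N - W + r) N) := by
    intro r
    induction r with
    | zero => exact fun _ => .refl
    | succ r ih => exact fun hr => (ih (by omega)).tail (left (by omega) le_rfl (Or.inl le_rfl)
        (by omega))
  have h₂ := shift (N - W) le_rfl
  have h₃ := drain W le_rfl
  rw [Nat.add_sub_cancel' hWN] at h₂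
  rw [Nat.sub_add_cancel hWN] at h₃
  rw [← bandConfig_zero_zero e (m' := m'), ← bandConfig_self_self e (m := m)]
  exact (fill W le_rfl).trans (h₂.trans h₃)

end Band

theorem colMajor_bandwidth {v w : SiteO K L} (h : adjO K L v w) :
    (finProdFinEquiv v : ℕ) ≤ finProdFinEquiv w + K := by
  rw [finProdFinEquiv_apply_val, finProdFinEquiv_apply_val]
  rcases h with ⟨h₁, h₂ | h₂⟩ | ⟨h₁, h₂ | h₂⟩
  · rw [h₁, ← h₂, Nat.mul_succ]; omega
  · rw [h₁, ← h₂, Nat.mul_succ]; omega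
  · rw [h₁]; omega
  · rw [h₁]; omega

theorem rowMajor_bandwidth {v w : SiteO K L} (h : adjO K L v w) :
    (((Equiv.prodComm _ _).trans finProdFinEquiv) v : ℕ) ≤
      ((Equiv.prodComm _ _).trans finProdFinEquiv) w + L := by
  simp only [Equiv.trans_apply, Equiv.prodComm_apply, finProdFinEquiv_apply_val, Prod.fst_swap,
    Prod.snd_swap]
  rcases h with ⟨h₁, h₂ | h₂⟩ | ⟨h₁, h₂ | h₂⟩
  · rw [h₁]; omega
  · rw [h₁]; omega
  · rw [h₁, ← h₂, Nat.mul_succ]; omega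
  · rw [h₁, ← h₂, Nat.mul_succ]; omega

theorem exists_isPathO_numZeros_le (hK : 0 < K) (hL : 0 < L) {m m' : ℕ} (hm : m ≠ 0)
    (hm' : m' ≠ 0) (hmM : m ≤ M) (hm'M : m' ≤ M) :
    ∃ ω, IsPathO K L M ω (fun _ => m) (fun _ => m') ∧ ∀ η ∈ ω, numZeros K L η ≤ min K L + 1 := by
  have hstep : Relation.ReflTransGen (StepBelow K L M (min K L + 1)) (fun _ => m) (fun _ => m') := by
    rcases le_total K L with hKL | hLK
    · rw [min_eq_left hKL]
      exact reflTransGen_const_const finProdFinEquiv (fun _ _ => colMajor_bandwidth)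
        (Nat.le_mul_of_pos_left K hL) hm hm' hmM hm'M
    · rw [min_eq_right hLK]
      exact reflTransGen_const_const _ (fun _ _ => rowMajor_bandwidth)
        (Nat.le_mul_of_pos_left L hK) hm hm' hmM hm'M
  exact exists_isPathO_of_reflTransGen hstep (isWRO_const hmM) (by simp [numZeros_const hm])

theorem comm_height_open_general (K L M : ℕ)
    (hK : 2 ≤ K) (hL : 2 ≤ L)
    (s s' : SiteO K L → ℕ) (hs : s ∈ stableO K L M) (hs' : s' ∈ stableO K L M)
    (hne : s ≠ s') :
    commO K L M s s' - HO K L s = ((min K L : ℕ) : ℤ) + 1 := by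
  obtain ⟨a, ha, haM, rfl⟩ := hs
  obtain ⟨b, hb, hbM, rfl⟩ := hs'
  have hab : a ≠ b := fun h => hne (h ▸ rfl)
  rw [commO_eq_of_bounds (c := ((min K L + 1 : ℕ) : ℤ) - (L * K : ℕ)), HO_eq_numZeros_sub,
    numZeros_const (by omega)]
  · push_cast
    ring
  · obtain ⟨ω, hω, hωn⟩ := exists_isPathO_numZeros_le (K := K) (L := L)
      (by omega) (by omega) (by omega : a ≠ 0) (by omega : b ≠ 0) haM hbM
    exact ⟨ω, hω, fun η hη => by rw [HO_eq_numZeros_sub]; have := hωn η hη; omega⟩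
  · intro ω hω
    obtain ⟨η, hη, hlt⟩ := exists_min_lt_numZeros_of_isPathO (by omega) hL (by omega) haM
      (by omega) hab hω
    exact ⟨η, hη, by rw [HO_eq_numZeros_sub]; omega⟩

/-- Communication height between distinct stable configurations of the
Widom–Rowlinson model on the open `K × L` lattice:
`Φ(s,s') - H(s) = min{K,L} + 1`. -/
theorem comm_height_open (K L M : ℕ)
    (hK : 2 ≤ K) (hL : 2 ≤ L) (hM : 2 ≤ M)
    (s s' : SiteO K L → ℕ) (hs : s ∈ stableO K L M) (hs' : s' ∈ stableO K L M)
    (hne : s ≠ s') :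
    commO K L M s s' - HO K L s = ((min K L : ℕ) : ℤ) + 1 :=
  comm_height_open_general K L M hK hL s s' hs hs' hne
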